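/- Let A be an arbitrary d×d complex matrix, G a Hermitian unitary d×d matrix, V(θ) = exp(−i(θ/2)G), and O₁, O₂ Hermitian d×d matrices that both anti-commute with G. Then, with E_θ the expectation over θ uniform on [−aπ, aπ] for a ∈ (0,1): (1) E_θ [Tr[O₁ V A V†] · Tr[O₂ V A V†]] = α · Tr[O₁A] · Tr[O₂A] + β · Tr[iGO₁A] · Tr[iGO₂A]; (2) E_θ [(d/dθ)Tr[O₁ V A V†] · (d/dθ)Tr[O₂ V A V†]] = β · Tr[O₁A] · Tr[O₂A] + α · Tr[iGO₁A] · Tr[iGO₂A], where α = (2 + sin(2aπ)/(aπ))/4, β = (2 − sin(2aπ)/(aπ))/4, and V = V(θ). -/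

import Mathlib

open MeasureTheory Matrix BigOperators

noncomputable section

/-- `V(θ) = exp(-i (θ/2) G)` (matrix exponential). -/
def Vrot {d : ℕ} (G : Matrix (Fin d) (Fin d) ℂ) (θ : ℝ) : Matrix (Fin d) (Fin d) ℂ :=
  NormedSpace.exp ((-(θ : ℂ) * Complex.I / 2) • G)

/-- Expectation `E_θ f(θ) = (1/(2aπ)) ∫_{-aπ}^{aπ} f(θ) dθ` of a complex-valued function of a
single parameter `θ` uniform on `[-aπ, aπ]`. -/
def expect1 (a : ℝ) (f : ℝ → ℂ) : ℂ :=
  (1 / (2 * a * Real.pi) : ℂ) * ∫ θ in (-(a * Real.pi))..(a * Real.pi), f θ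

lemma exp_smul_sq_one {d : ℕ} (G : Matrix (Fin d) (Fin d) ℂ) (hGU : G * G = 1) (z : ℂ) :
    NormedSpace.exp (z • G) =
      Complex.cosh z • (1 : Matrix (Fin d) (Fin d) ℂ) + Complex.sinh z • G := by
  have hGsq : G ^ 2 = 1 := by rw [sq, hGU]
  rw [NormedSpace.exp_eq_tsum ℂ]
  refine HasSum.tsum_eq ?_
  refine HasSum.even_add_odd ?_ ?_
  · have h := (Complex.hasSum_cosh z).smul_const (1 : Matrix (Fin d) (Fin d) ℂ)
    convert h using 2 with k
    · rfl
    rw [smul_pow, show G ^ (2 * k) = 1 by rw [pow_mul, hGsq, one_pow], smul_smul]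
    congr 1
    field_simp
  · have h := (Complex.hasSum_sinh z).smul_const G
    convert h using 2 with k
    · rfl
    rw [smul_pow, show G ^ (2 * k + 1) = G by rw [pow_succ, pow_mul, hGsq, one_pow, one_mul],
      smul_smul]
    congr 1
    field_simp

lemma Vrot_eq {d : ℕ} (G : Matrix (Fin d) (Fin d) ℂ) (hGU : G * G = 1) (θ : ℝ) :
    Vrot G θ = ((Real.cos (θ / 2) : ℝ) : ℂ) • (1 : Matrix (Fin d) (Fin d) ℂ) +
      (-((Real.sin (θ / 2) : ℝ) : ℂ) * Complex.I) • G := by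
  have hz : (-(θ : ℂ) * Complex.I / 2) = ((-(θ / 2) : ℝ) : ℂ) * Complex.I := by
    push_cast; ring
  rw [Vrot, hz, exp_smul_sq_one G hGU]
  rw [Complex.cosh_mul_I, Complex.sinh_mul_I]
  congr 1
  · congr 1
    rw [← Complex.ofReal_cos, Real.cos_neg]
  · congr 1
    rw [← Complex.ofReal_sin, Real.sin_neg]
    push_cast; ring

lemma Vrot_conjT {d : ℕ} (G : Matrix (Fin d) (Fin d) ℂ) (hGH : G.IsHermitian)
    (hGU : G * G = 1) (θ : ℝ) :
    (Vrot G θ)ᴴ = ((Real.cos (θ / 2) : ℝ) : ℂ) • (1 : Matrix (Fin d) (Fin d) ℂ) +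
      (((Real.sin (θ / 2) : ℝ) : ℂ) * Complex.I) • G := by
  rw [Vrot_eq G hGU θ, conjTranspose_add, conjTranspose_smul, conjTranspose_smul,
    conjTranspose_one, hGH.eq]
  congr 1
  · congr 1
    exact Complex.conj_ofReal _
  · congr 1
    simp only [star_mul', map_neg, Complex.conj_ofReal, Complex.star_def, Complex.conj_I]
    ring

lemma trace_formula {d : ℕ} (A G O : Matrix (Fin d) (Fin d) ℂ)
    (hGH : G.IsHermitian) (hGU : G * G = 1) (hanti : O * G = -(G * O)) (θ : ℝ) :
    Matrix.trace (O * Vrot G θ * A * (Vrot G θ)ᴴ) =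
      ((Real.cos θ : ℝ) : ℂ) * Matrix.trace (O * A) +
      ((Real.sin θ : ℝ) : ℂ) * (Complex.I * Matrix.trace (G * O * A)) := by
  have h1 : Matrix.trace (O * A * G) = Matrix.trace (G * O * A) := by
    rw [Matrix.trace_mul_cycle]
  have h2 : Matrix.trace (O * G * A) = -Matrix.trace (G * O * A) := by
    rw [hanti]; simp [Matrix.neg_mul]
  have h3 : Matrix.trace (O * G * A * G) = -Matrix.trace (O * A) := by
    rw [Matrix.trace_mul_cycle (O * G) A G]
    have hgog : G * (O * G) = -O := by
      rw [hanti, Matrix.mul_neg, ← Matrix.mul_assoc, hGU, Matrix.one_mul]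
    rw [hgog]
    simp [Matrix.neg_mul]
  rw [Vrot_conjT G hGH hGU θ, Vrot_eq G hGU θ]
  have hc : ((Real.cos θ : ℝ) : ℂ) = (Real.cos (θ / 2) : ℂ) ^ 2 - (Real.sin (θ / 2) : ℂ) ^ 2 := by
    rw [show θ = 2 * (θ / 2) by ring, Real.cos_two_mul']
    push_cast
    ring_nf
  have hs : ((Real.sin θ : ℝ) : ℂ) =
      2 * (Real.sin (θ / 2) : ℂ) * (Real.cos (θ / 2) : ℂ) := by
    rw [show θ = 2 * (θ / 2) by ring, Real.sin_two_mul]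
    push_cast
    ring_nf
  simp only [Matrix.mul_add, Matrix.add_mul, Matrix.mul_smul, Matrix.smul_mul,
    Matrix.mul_one, Matrix.one_mul, Matrix.trace_add, Matrix.trace_smul, smul_smul,
    smul_eq_mul]
  rw [h1, h2, h3, hc, hs]
  ring_nf
  rw [Complex.I_sq]
  ring

lemma deriv_formula (x y : ℂ) (θ : ℝ) :
    deriv (fun t : ℝ => ((Real.cos t : ℝ) : ℂ) * x + ((Real.sin t : ℝ) : ℂ) * y) θ =
      ((Real.cos θ : ℝ) : ℂ) * y + ((Real.sin θ : ℝ) : ℂ) * (-x) := by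
  have h : HasDerivAt (fun t : ℝ => ((Real.cos t : ℝ) : ℂ) * x + ((Real.sin t : ℝ) : ℂ) * y)
      (((-Real.sin θ : ℝ) : ℂ) * x + ((Real.cos θ : ℝ) : ℂ) * y) θ :=
    (((Real.hasDerivAt_cos θ).ofReal_comp).mul_const x).add
      (((Real.hasDerivAt_sin θ).ofReal_comp).mul_const y)
  rw [h.deriv]
  push_cast
  ring

lemma key_integral (a : ℝ) (ha : a ∈ Set.Ioo (0 : ℝ) 1) (x₁ y₁ x₂ y₂ : ℂ) :
    expect1 a (fun θ => (((Real.cos θ : ℝ) : ℂ) * x₁ + ((Real.sin θ : ℝ) : ℂ) * y₁) *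
        (((Real.cos θ : ℝ) : ℂ) * x₂ + ((Real.sin θ : ℝ) : ℂ) * y₂)) =
      (((2 + Real.sin (2 * a * Real.pi) / (a * Real.pi)) / 4 : ℝ) : ℂ) * (x₁ * x₂) +
      (((2 - Real.sin (2 * a * Real.pi) / (a * Real.pi)) / 4 : ℝ) : ℂ) * (y₁ * y₂) := by
  have ha0 : 0 < a := ha.1
  have hpi := Real.pi_pos
  have hL0 : a * Real.pi ≠ 0 := by positivity
  have hfe : ∀ θ : ℝ, (((Real.cos θ : ℝ) : ℂ) * x₁ + ((Real.sin θ : ℝ) : ℂ) * y₁) *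
      (((Real.cos θ : ℝ) : ℂ) * x₂ + ((Real.sin θ : ℝ) : ℂ) * y₂) =
      ((Real.cos θ ^ 2 : ℝ) : ℂ) * (x₁ * x₂) +
        (((Real.sin θ * Real.cos θ : ℝ) : ℂ) * (x₁ * y₂ + y₁ * x₂) +
        ((Real.sin θ ^ 2 : ℝ) : ℂ) * (y₁ * y₂)) := by
    intro θ
    push_cast
    ring
  rw [expect1]
  simp only [hfe]
  have i1 : IntervalIntegrable (fun θ : ℝ => ((Real.cos θ ^ 2 : ℝ) : ℂ) * (x₁ * x₂))
      volume (-(a * Real.pi)) (a * Real.pi) := by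
    apply Continuous.intervalIntegrable
    continuity
  have i2 : IntervalIntegrable
      (fun θ : ℝ => ((Real.sin θ * Real.cos θ : ℝ) : ℂ) * (x₁ * y₂ + y₁ * x₂)) volume (-(a * Real.pi)) (a * Real.pi) := by
    apply Continuous.intervalIntegrable
    continuity
  have i3 : IntervalIntegrable (fun θ : ℝ => ((Real.sin θ ^ 2 : ℝ) : ℂ) * (y₁ * y₂))
      volume (-(a * Real.pi)) (a * Real.pi) := by
    apply Continuous.intervalIntegrable
    continuity
  rw [intervalIntegral.integral_add i1 (i2.add i3), intervalIntegral.integral_add i2 i3,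
    intervalIntegral.integral_mul_const, intervalIntegral.integral_mul_const,
    intervalIntegral.integral_mul_const, intervalIntegral.integral_ofReal,
    intervalIntegral.integral_ofReal, intervalIntegral.integral_ofReal,
    integral_cos_sq, integral_sin_sq, integral_sin_mul_cos₁]
  simp only [Real.sin_neg, Real.cos_neg, neg_neg, neg_sq]
  have hsin2 : Real.sin (2 * a * Real.pi) =
      2 * Real.sin (a * Real.pi) * Real.cos (a * Real.pi) := by
    rw [show 2 * a * Real.pi = 2 * (a * Real.pi) by ring, Real.sin_two_mul]
  have ha0' : (a : ℂ) ≠ 0 := by exact_mod_cast ne_of_gt ha.1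
  have hpi0 : (Real.pi : ℂ) ≠ 0 := by exact_mod_cast Real.pi_ne_zero
  rw [hsin2]
  push_cast
  field_simp
  ring

/-- second-moment identities for Hermitian `O₁, O₂` both anti-commuting with
a Hermitian unitary `G`. -/
theorem statement13 {d : ℕ} (hd : 1 ≤ d) (A G O₁ O₂ : Matrix (Fin d) (Fin d) ℂ)
    (hGH : G.IsHermitian) (hGU : G * G = 1)
    (hO₁H : O₁.IsHermitian) (hanti₁ : O₁ * G = -(G * O₁))
    (hO₂H : O₂.IsHermitian) (hanti₂ : O₂ * G = -(G * O₂))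
    (a : ℝ) (ha : a ∈ Set.Ioo (0 : ℝ) 1) :
    expect1 a (fun θ => Matrix.trace (O₁ * Vrot G θ * A * (Vrot G θ)ᴴ) *
        Matrix.trace (O₂ * Vrot G θ * A * (Vrot G θ)ᴴ)) =
      (((2 + Real.sin (2 * a * Real.pi) / (a * Real.pi)) / 4 : ℝ) : ℂ) *
          (Matrix.trace (O₁ * A) * Matrix.trace (O₂ * A)) +
        (((2 - Real.sin (2 * a * Real.pi) / (a * Real.pi)) / 4 : ℝ) : ℂ) *
          ((Complex.I * Matrix.trace (G * O₁ * A)) *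
            (Complex.I * Matrix.trace (G * O₂ * A))) ∧
    expect1 a (fun θ =>
        deriv (fun t => Matrix.trace (O₁ * Vrot G t * A * (Vrot G t)ᴴ)) θ *
          deriv (fun t => Matrix.trace (O₂ * Vrot G t * A * (Vrot G t)ᴴ)) θ) =
      (((2 - Real.sin (2 * a * Real.pi) / (a * Real.pi)) / 4 : ℝ) : ℂ) *
          (Matrix.trace (O₁ * A) * Matrix.trace (O₂ * A)) +
        (((2 + Real.sin (2 * a * Real.pi) / (a * Real.pi)) / 4 : ℝ) : ℂ) *
          ((Complex.I * Matrix.trace (G * O₁ * A)) *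
            (Complex.I * Matrix.trace (G * O₂ * A))) := by
  set x₁ := Matrix.trace (O₁ * A) with hx₁
  set x₂ := Matrix.trace (O₂ * A) with hx₂
  set y₁ := Complex.I * Matrix.trace (G * O₁ * A) with hy₁
  set y₂ := Complex.I * Matrix.trace (G * O₂ * A) with hy₂
  have t1 : ∀ θ : ℝ, Matrix.trace (O₁ * Vrot G θ * A * (Vrot G θ)ᴴ) =
      ((Real.cos θ : ℝ) : ℂ) * x₁ + ((Real.sin θ : ℝ) : ℂ) * y₁ := fun θ =>
    trace_formula A G O₁ hGH hGU hanti₁ θ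
  have t2 : ∀ θ : ℝ, Matrix.trace (O₂ * Vrot G θ * A * (Vrot G θ)ᴴ) =
      ((Real.cos θ : ℝ) : ℂ) * x₂ + ((Real.sin θ : ℝ) : ℂ) * y₂ := fun θ =>
    trace_formula A G O₂ hGH hGU hanti₂ θ
  constructor
  · have hfun : (fun θ : ℝ => Matrix.trace (O₁ * Vrot G θ * A * (Vrot G θ)ᴴ) *
        Matrix.trace (O₂ * Vrot G θ * A * (Vrot G θ)ᴴ)) =
        fun θ : ℝ => (((Real.cos θ : ℝ) : ℂ) * x₁ + ((Real.sin θ : ℝ) : ℂ) * y₁) *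
          (((Real.cos θ : ℝ) : ℂ) * x₂ + ((Real.sin θ : ℝ) : ℂ) * y₂) :=
      funext fun θ => by rw [t1 θ, t2 θ]
    rw [hfun, key_integral a ha x₁ y₁ x₂ y₂]
  · have d1 : ∀ θ : ℝ, deriv (fun t => Matrix.trace (O₁ * Vrot G t * A * (Vrot G t)ᴴ)) θ =
        ((Real.cos θ : ℝ) : ℂ) * y₁ + ((Real.sin θ : ℝ) : ℂ) * (-x₁) := by
      intro θ
      rw [show (fun t => Matrix.trace (O₁ * Vrot G t * A * (Vrot G t)ᴴ)) =
        fun t : ℝ => ((Real.cos t : ℝ) : ℂ) * x₁ + ((Real.sin t : ℝ) : ℂ) * y₁ from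
        funext fun t => t1 t]
      exact deriv_formula x₁ y₁ θ
    have d2 : ∀ θ : ℝ, deriv (fun t => Matrix.trace (O₂ * Vrot G t * A * (Vrot G t)ᴴ)) θ =
        ((Real.cos θ : ℝ) : ℂ) * y₂ + ((Real.sin θ : ℝ) : ℂ) * (-x₂) := by
      intro θ
      rw [show (fun t => Matrix.trace (O₂ * Vrot G t * A * (Vrot G t)ᴴ)) =
        fun t : ℝ => ((Real.cos t : ℝ) : ℂ) * x₂ + ((Real.sin t : ℝ) : ℂ) * y₂ from
        funext fun t => t2 t]
      exact deriv_formula x₂ y₂ θ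
    have hfun : (fun θ : ℝ =>
        deriv (fun t => Matrix.trace (O₁ * Vrot G t * A * (Vrot G t)ᴴ)) θ *
          deriv (fun t => Matrix.trace (O₂ * Vrot G t * A * (Vrot G t)ᴴ)) θ) =
        fun θ : ℝ => (((Real.cos θ : ℝ) : ℂ) * y₁ + ((Real.sin θ : ℝ) : ℂ) * (-x₁)) *
          (((Real.cos θ : ℝ) : ℂ) * y₂ + ((Real.sin θ : ℝ) : ℂ) * (-x₂)) :=
      funext fun θ => by rw [d1 θ, d2 θ]
    rw [hfun, key_integral a ha y₁ (-x₁) y₂ (-x₂)]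
    ring


end
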